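/- arXiv:2001.02124 — 4 statements merged into one kernel-verified Lean document; each statement's English description precedes it below -/
import Mathlib

section
/- Let U be a σ-complete ultrafilter over a set A, let μ ≤ ν be cardinals with ν regular, and let j : V → M be the ultrapower embedding induced by U. Then U is (μ, ν)-regular if and only if the cofinality of sup(j''ν), computed in M, is strictly less than j(μ). -/
open Cardinal Filter

def SigmaComplete {A : Type} (F : Filter A) : Prop :=
  ∀ s : Set (Set A), s.Countable → (∀ t ∈ s, t ∈ F) → ⋂₀ s ∈ F

/-- `U` is a `(μ, ν)`-regular ultrafilter. -/
def IsRegUF {A : Type} (U : Ultrafilter A) (μ ν : Cardinal) : Prop :=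
  ∃ (ι : Type) (X : ι → Set A), #ι = ν ∧ (∀ i, X i ∈ U) ∧
    ∀ s : Set ι, #s = μ → ⋂ i ∈ s, X i = ∅

/-!
Write `s = [f]_U`. As `s` is the least upper bound of `j''ν`, any `g < f` (mod `U`) lies below
some constant `β < ν` (mod `U`), while `β < f` (mod `U`) for every `β < ν`.

A regularity witness `(X_α)_{α < ν}` puts each point in fewer than `μ` of the `X_α`. If
`cf (f a) ≥ μ` for almost all `a`, then `g a = sup {α < f a | a ∈ X_α}` is below `f a`, so
`g < β` for some `β < ν`; but almost every `a` has `β < f a` and `a ∈ X_β`, so `β ≤ g a`.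

Conversely, pick cofinal sets `C_a ⊆ f a` of size `cf (f a) < μ` and let `h_α a` be the least
point of `C_a` above `α`. Then `h_α < next α` (mod `U`) for some `next α < ν`. Regularity of `ν`
gives `ν` many `α` with `next α ≤ α'` whenever `α < α'`; for these,
`X_α = {a | α ≤ h_α a < next α}` lie in `U` and `α ↦ h_α a` is injective on the `α` with
`a ∈ X_α`, so each `a` is in at most `|C_a| < μ` of them.
-/

open Set

universe u

theorem forall_biInter_eq_empty_iff_forall_mk_lt {ι A : Type*} (X : ι → Set A) (μ : Cardinal) :
    (∀ s : Set ι, #s = μ → ⋂ i ∈ s, X i = ∅) ↔ ∀ a, #{i | a ∈ X i} < μ := by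
  refine ⟨fun h a => ?_, fun h s hs => ?_⟩
  · by_contra! hle
    obtain ⟨s, hs, rfl⟩ := le_mk_iff_exists_subset.1 hle
    have : a ∈ ⋂ i ∈ s, X i := mem_iInter₂.2 hs
    simp [h s rfl] at this
  · refine eq_empty_of_forall_notMem fun a ha => (h a).not_ge ?_
    exact hs ▸ mk_le_mk_of_subset fun i hi => mem_iInter₂.1 ha i hi

theorem isRegUF_iff_exists_mk_traces_lt {A : Type} {U : Ultrafilter A} {μ ν : Cardinal}
    {I : Set Ordinal.{0}} (hI : #I = lift.{1} ν) :
    IsRegUF U μ ν ↔ ∃ X : Ordinal.{0} → Set A, (∀ α ∈ I, X α ∈ U) ∧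
      ∀ a, #{α ∈ I | a ∈ X α} < lift.{1} μ := by
  classical
  constructor
  · rintro ⟨ι, X, hι, hXU, hX⟩
    obtain ⟨e⟩ : Nonempty (I ≃ ι) := lift_mk_eq'.1 (by simp [hI, hι])
    set Y : Ordinal.{0} → Set A := fun α => if h : α ∈ I then X (e ⟨α, h⟩) else ∅
    refine ⟨Y, fun α hα => by simpa [Y, hα] using hXU _, fun a => ?_⟩
    have hinj : lift.{0} #{α ∈ I | a ∈ Y α} ≤ lift.{1} #{i | a ∈ X i} := by
      refine lift_mk_le'.2 ⟨⟨fun α => ⟨e ⟨α.1, α.2.1⟩, by simpa [Y, α.2.1] using α.2.2⟩, ?_⟩⟩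
      intro α β hαβ
      simpa [Subtype.ext_iff] using hαβ
    simpa using hinj.trans_lt (lift_lt.2 ((forall_biInter_eq_empty_iff_forall_mk_lt X μ).1 hX a))
  · rintro ⟨X, hXU, hX⟩
    obtain ⟨e⟩ : Nonempty (ν.out ≃ I) := lift_mk_eq'.1 (by simp [hI])
    refine ⟨ν.out, fun i => X (e i), mk_out ν, fun i => hXU _ (e i).2,
      (forall_biInter_eq_empty_iff_forall_mk_lt _ μ).2 fun a => ?_⟩
    have hinj : lift.{1} #{i | a ∈ X (e i)} ≤ lift.{0} #{α ∈ I | a ∈ X α} :=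
      lift_mk_le'.2 ⟨⟨fun i => ⟨e i.1, (e i.1).2, i.2⟩, fun i j hij => by
        have h := Subtype.ext_iff.1 hij
        exact Subtype.ext (e.injective (Subtype.ext h))⟩⟩
    rw [lift_uzero] at hinj
    exact lift_lt.1 (hinj.trans_lt (hX a))

/-- `j '' o` for the ultrapower embedding `j`. -/
def constGermsBelow {A : Type*} (U : Ultrafilter A) (o : Ordinal.{u}) :
    Set ((U : Filter A).Germ Ordinal.{u}) :=
  {g | ∃ α : Ordinal.{u}, α < o ∧ g = ↑(fun _ : A => α)}

section LUB

variable {A : Type*} {U : Ultrafilter A} {o : Ordinal.{u}} {f : A → Ordinal.{u}}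
  (hf : IsLUB (constGermsBelow U o) (f : (U : Filter A).Germ Ordinal))
include hf

theorem eventually_lt_of_isLUB_constGermsBelow (ho : Order.IsSuccLimit o) {β : Ordinal}
    (hβ : β < o) :
    ∀ᶠ a in (U : Filter A), β < f a :=
  Germ.coe_lt.1 <| (Germ.const_lt (Order.lt_succ β)).trans_le (hf.1 ⟨_, ho.succ_lt hβ, rfl⟩)

theorem exists_eventually_lt_of_isLUB_constGermsBelow {g : A → Ordinal.{u}}
    (hg : ∀ᶠ a in (U : Filter A), g a < f a) : ∃ β < o, ∀ᶠ a in (U : Filter A), g a < β := by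
  obtain ⟨_, ⟨β, hβ, rfl⟩, hgβ⟩ := (lt_isLUB_iff hf).1 (Germ.coe_lt.2 hg)
  exact ⟨β, hβ, Germ.coe_lt.1 hgβ⟩

end LUB

theorem eventually_cof_lt_of_mk_traces_lt {A : Type*} {U : Ultrafilter A} {μ : Cardinal.{u}}
    {o : Ordinal.{u}} (ho : Order.IsSuccLimit o) {f : A → Ordinal.{u}}
    (hf : IsLUB (constGermsBelow U o) (f : (U : Filter A).Germ Ordinal))
    {X : Ordinal.{u} → Set A} (hXU : ∀ α < o, X α ∈ U)
    (hX : ∀ a, #{α ∈ Iio o | a ∈ X α} < lift.{u + 1} μ) :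
    ∀ᶠ a in (U : Filter A), (f a).cof < μ := by
  by_contra hcof
  set g : A → Ordinal.{u} := fun a => sSup ({α ∈ Iio o | a ∈ X α} ∩ Iio (f a))
  have hgf : ∀ᶠ a in (U : Filter A), g a < f a := by
    filter_upwards [Ultrafilter.eventually_not.2 hcof] with a ha
    refine Ordinal.sSup_lt_of_lt_cof ?_ fun α hα => hα.2
    calc #(({α ∈ Iio o | a ∈ X α} ∩ Iio (f a) : Set Ordinal))
        ≤ #{α ∈ Iio o | a ∈ X α} := mk_le_mk_of_subset inter_subset_left
      _ < lift.{u + 1} μ := hX a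
      _ ≤ (Ordinal.lift.{u + 1} (f a)).cof := by
        rw [← Ordinal.lift_cof]
        exact lift_le.2 (not_lt.1 ha)
  obtain ⟨β, hβ, hgβ⟩ := exists_eventually_lt_of_isLUB_constGermsBelow hf hgf
  have hXβU : ∀ᶠ a in (U : Filter A), a ∈ X β := hXU β hβ
  obtain ⟨a, hβf, hXβ, hga⟩ :=
    ((eventually_lt_of_isLUB_constGermsBelow hf ho hβ).and (hXβU.and hgβ)).exists
  exact hga.not_ge (le_csSup ⟨f a, fun _ h => h.2.le⟩ ⟨⟨hβ, hXβ⟩, hβf⟩)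

theorem Ordinal.exists_cofinal_subset_Iio (o : Ordinal.{u}) :
    ∃ C ⊆ Iio o, (∀ b < o, ∃ c ∈ C, b ≤ c) ∧ #C = Cardinal.lift.{u + 1} o.cof := by
  obtain ⟨s, hs, hsmk⟩ := Order.exists_cof_eq (Iio o)
  refine ⟨Subtype.val '' s, fun _ ⟨c, _, hc⟩ => hc ▸ c.2, fun b hb => ?_, ?_⟩
  · obtain ⟨c, hc, hbc⟩ := hs ⟨b, hb⟩
    exact ⟨c, mem_image_of_mem _ hc, hbc⟩
  · rw [mk_image_eq Subtype.val_injective, hsmk, Ordinal.cof_Iio, Ordinal.lift_cof]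

theorem Cardinal.IsRegular.exists_separated_subset_Iio_ord {ν : Cardinal.{u}} (hν : ν.IsRegular)
    {next : Ordinal.{u} → Ordinal.{u}} (hnext : ∀ α < ν.ord, α < next α ∧ next α < ν.ord) :
    ∃ S ⊆ Iio ν.ord, #S = Cardinal.lift.{u + 1} ν ∧
      S.Pairwise fun α β => α < β → next α ≤ β := by
  obtain ⟨S, hS⟩ := zorn_subset {T | T ⊆ Iio ν.ord ∧ T.Pairwise fun α β => α < β → next α ≤ β}
    fun c hc hchain => ⟨⋃₀ c, ⟨sUnion_subset fun T hT => (hc hT).1,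
      hchain.pairwise_sUnion.2 fun T hT => (hc hT).2⟩, fun _ => subset_sUnion_of_mem⟩
  obtain ⟨hSν, hSsep⟩ := hS.prop
  refine ⟨S, hSν, le_antisymm ?_ (not_lt.1 fun hSmk => ?_), hSsep⟩
  · simpa [mk_Iio_ordinal] using mk_le_mk_of_subset hSν
  -- a small separated set has room above it for one more point
  set γ := sSup (next '' S)
  have hγ : γ < ν.ord := by
    refine Ordinal.sSup_lt_of_lt_cof ?_ fun _ ⟨α, hα, hαγ⟩ => hαγ ▸ (hnext α (hSν hα)).2
    rw [← Ordinal.lift_cof, hν.cof_ord]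
    exact mk_image_le.trans_lt hSmk
  have hle : ∀ α ∈ S, next α ≤ γ := fun α hα =>
    le_csSup ⟨ν.ord, fun _ ⟨β, hβ, hβγ⟩ => hβγ ▸ (hnext β (hSν hβ)).2.le⟩ ⟨α, hα, rfl⟩
  have hγS : γ ∈ S := hS.mem_of_prop_insert ⟨insert_subset hγ hSν, pairwise_insert.2
    ⟨hSsep, fun α hα _ =>
      ⟨fun hγα => absurd ((hnext α (hSν hα)).1.trans_le (hle α hα)) hγα.not_gt, fun _ => hle α hα⟩⟩⟩
  exact (hnext γ hγ).1.not_ge (hle γ hγS)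

theorem exists_mk_traces_lt_of_eventually_cof_lt {A : Type*} {U : Ultrafilter A}
    {μ ν : Cardinal.{u}} (hν : ν.IsRegular) {f : A → Ordinal.{u}}
    (hf : IsLUB (constGermsBelow U ν.ord) (f : (U : Filter A).Germ Ordinal))
    (hcof : ∀ᶠ a in (U : Filter A), (f a).cof < μ) :
    ∃ S : Set Ordinal.{u}, #S = Cardinal.lift.{u + 1} ν ∧ ∃ X : Ordinal.{u} → Set A,
      (∀ α ∈ S, X α ∈ U) ∧ ∀ a, #{α ∈ S | a ∈ X α} < Cardinal.lift.{u + 1} μ := by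
  have hlim := isSuccLimit_ord hν.aleph0_le
  choose C hCf hCcof hCmk using fun a => (f a).exists_cofinal_subset_Iio
  set h : Ordinal.{u} → A → Ordinal.{u} := fun α a => sInf (C a ∩ Ici α)
  have hh : ∀ α a, α < f a → h α a ∈ C a ∧ α ≤ h α a := by
    intro α a hα
    obtain ⟨c, hc, hαc⟩ := hCcof a α hα
    exact csInf_mem (s := C a ∩ Ici α) ⟨c, hc, hαc⟩
  have hnext : ∀ α, ∃ β, α < ν.ord → α < β ∧ β < ν.ord ∧ ∀ᶠ a in (U : Filter A), h α a < β := by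
    intro α
    by_cases hα : α < ν.ord
    · have hαf := eventually_lt_of_isLUB_constGermsBelow hf hlim hα
      obtain ⟨β, hβ, hhβ⟩ := exists_eventually_lt_of_isLUB_constGermsBelow hf
        (hαf.mono fun a ha => hCf a (hh α a ha).1)
      obtain ⟨a, ha, hβa⟩ := (hαf.and hhβ).exists
      exact ⟨β, fun _ => ⟨(hh α a ha).2.trans_lt hβa, hβ, hhβ⟩⟩
    · exact ⟨0, fun hα' => absurd hα' hα⟩
  choose next hnext using hnext
  obtain ⟨S, hSν, hSmk, hSsep⟩ :=
    hν.exists_separated_subset_Iio_ord fun α hα => ⟨(hnext α hα).1, (hnext α hα).2.1⟩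
  set X : Ordinal.{u} → Set A :=
    fun α => {a | (f a).cof < μ ∧ h α a ∈ C a ∧ α ≤ h α a ∧ h α a < next α}
  refine ⟨S, hSmk, X, fun α hα => ?_, fun a => ?_⟩
  · filter_upwards [hcof, eventually_lt_of_isLUB_constGermsBelow hf hlim (hSν hα),
      (hnext α (hSν hα)).2.2] with a hμ hαf hβ
    exact ⟨hμ, (hh α a hαf).1, (hh α a hαf).2, hβ⟩
  rcases eq_empty_or_nonempty {α ∈ S | a ∈ X α} with hempty | ⟨-, -, hμ, -⟩
  · obtain ⟨_, hμ⟩ := hcof.exists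
    rw [hempty, mk_eq_zero, ← Cardinal.lift_zero.{u, u + 1}, Cardinal.lift_lt]
    exact zero_le.trans_lt hμ
  have hmono : StrictMonoOn (h · a) {α ∈ S | a ∈ X α} := fun α hα β hβ hαβ =>
    hα.2.2.2.2.trans_le ((hSsep hα.1 hβ.1 hαβ.ne hαβ).trans hβ.2.2.2.1)
  calc #{α ∈ S | a ∈ X α} = #((h · a) '' {α ∈ S | a ∈ X α}) :=
        (mk_image_eq_of_injOn _ _ hmono.injOn).symm
    _ ≤ #(C a) := mk_le_mk_of_subset (image_subset_iff.2 fun α hα => hα.2.2.1)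
    _ < Cardinal.lift.{u + 1} μ := hCmk a ▸ Cardinal.lift_lt.2 hμ

/-- Here the ordinals of the ultrapower `M` are realized as germs of `Ordinal`-valued
functions modulo `U`; `j(α)` is the constant germ at `α`, so `sup(j''ν)` is the least
upper bound `s` of the constant germs at ordinals `α < ν` (as an ordinal, `ν`
is identified with `ν.ord`).  By Łoś's theorem, `cf^M([f]_U) = [a ↦ cf(f(a))]_U`, so
`cf^M(s) < j(μ)` says precisely that some representative `f` of `s` satisfies
`cf (f a) < μ` for `U`-almost all `a`. -/
theorem stmt4_general {A : Type} (U : Ultrafilter A)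
    (μ ν : Cardinal) (hν : ν.IsRegular)
    (s : (U : Filter A).Germ Ordinal)
    (hs : IsLUB {g : (U : Filter A).Germ Ordinal |
      ∃ α : Ordinal, α < ν.ord ∧ g = ↑(fun _ : A => α)} s) :
    IsRegUF U μ ν ↔
      ∃ f : A → Ordinal, (↑f : (U : Filter A).Germ Ordinal) = s ∧
        {a : A | (f a).cof < μ} ∈ U := by
  obtain ⟨f, rfl⟩ := Quotient.exists_rep s
  constructor
  · intro hreg
    have hI : #(Iio ν.ord) = lift.{1} ν := by rw [mk_Iio_ordinal, card_ord]
    obtain ⟨X, hXU, hX⟩ := (isRegUF_iff_exists_mk_traces_lt hI).1 hreg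
    exact ⟨f, rfl, eventually_cof_lt_of_mk_traces_lt (isSuccLimit_ord hν.aleph0_le) hs hXU hX⟩
  · rintro ⟨g, hgf, hcof⟩
    obtain ⟨S, hSmk, X, hXU, hX⟩ := exists_mk_traces_lt_of_eventually_cof_lt hν (hgf ▸ hs) hcof
    exact (isRegUF_iff_exists_mk_traces_lt hSmk).2 ⟨X, hXU, hX⟩

/-- let `U` be a σ-complete ultrafilter over `A`, `μ ≤ ν` cardinals with `ν`
regular, and `j : V → M ≈ Ult(V,U)` the induced ultrapower embedding.  Then `U` is
`(μ, ν)`-regular iff `cf^M(sup(j''ν)) < j(μ)`.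

Here the ordinals of the ultrapower `M` are realized as germs of `Ordinal`-valued
functions modulo `U`; `j(α)` is the constant germ at `α`, so `sup(j''ν)` is the least
upper bound `s` of the constant germs at ordinals `α < ν` (as an ordinal, `ν`
is identified with `ν.ord`).  By Łoś's theorem, `cf^M([f]_U) = [a ↦ cf(f(a))]_U`, so
`cf^M(s) < j(μ)` says precisely that some representative `f` of `s` satisfies
`cf (f a) < μ` for `U`-almost all `a`. -/
theorem stmt4 {A : Type} (U : Ultrafilter A) (hU : SigmaComplete (U : Filter A))
    (μ ν : Cardinal) (hμν : μ ≤ ν) (hν : ν.IsRegular)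
    (s : (U : Filter A).Germ Ordinal)
    (hs : IsLUB {g : (U : Filter A).Germ Ordinal |
      ∃ α : Ordinal, α < ν.ord ∧ g = ↑(fun _ : A => α)} s) :
    IsRegUF U μ ν ↔
      ∃ f : A → Ordinal, (↑f : (U : Filter A).Germ Ordinal) = s ∧
        {a : A | (f a).cof < μ} ∈ U :=
  stmt4_general U μ ν hν s hs
end

section
/- Let λ be a regular cardinal and δ ≤ λ an uncountable cardinal. If there exists a δ-complete uniform ultrafilter over λ, then there exists a δ-complete weakly normal uniform ultrafilter over λ. -/
/-!
Since `U` is countably complete, `f <_U g :↔ {α | f α < g α} ∈ U` is well-founded on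
`λ → λ`, so there is a `<_U`-minimal `f` for which the pushforward `f_* U` is still uniform.
If `g` is regressive on a set in `f_* U`, then `g ∘ f <_U f`, so `(g ∘ f)_* U` is not uniform:
it contains a set of size `< λ`, which is bounded in `λ` by regularity, and a bound on that
set bounds `g` on a set in `f_* U`.
-/

open Cardinal Filter

/-- A filter is `δ`-complete if it is closed under intersections of fewer than `δ`
of its members. -/
def UComplete {A : Type} (δ : Cardinal) (F : Filter A) : Prop :=
  ∀ s : Set (Set A), #s < δ → (∀ t ∈ s, t ∈ F) → ⋂₀ s ∈ F

namespace UComplete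

variable {A B : Type} {δ : Cardinal} {F : Filter A}

theorem map (hF : UComplete δ F) (f : A → B) : UComplete δ (F.map f) := by
  intro s hs hsF
  rw [mem_map, Set.preimage_sInter, ← Set.sInter_image]
  exact hF _ (mk_image_le.trans_lt hs) (Set.forall_mem_image.2 hsF)

theorem countableInterFilter (hδ : ℵ₀ < δ) (hF : UComplete δ F) : CountableInterFilter F :=
  ⟨fun s hs hsF => hF s ((le_aleph0_iff_set_countable.2 hs).trans_lt hδ) hsF⟩

end UComplete

theorem Filter.wellFounded_eventually_lt {α β : Type*} [Preorder β] [WellFoundedLT β]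
    (l : Filter α) [CountableInterFilter l] [NeBot l] :
    WellFounded fun f g : α → β => ∀ᶠ x in l, f x < g x := by
  refine wellFounded_iff_isEmpty_descending_chain.2 ⟨fun ⟨f, hf⟩ => ?_⟩
  obtain ⟨x, hx⟩ := (eventually_countable_forall.2 hf).exists
  exact (wellFounded_iff_isEmpty_descending_chain.1 wellFounded_lt).false ⟨(f · x), hx⟩

theorem Cardinal.IsRegular.exists_eventually_lt {lam : Cardinal} (hlam : lam.IsRegular)
    (V : Filter lam.ord.ToType) (hV : ¬ ∀ X ∈ V, #X = lam) :
    ∃ γ, ∀ᶠ y in V, y < γ := by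
  obtain ⟨X, hXV, hX⟩ := not_forall₂.1 hV
  have hXlt : #X < Order.cof lam.ord.ToType := by
    rw [Ordinal.cof_toType, hlam.cof_ord]
    exact (mk_set_le X).trans_eq (by rw [mk_toType, card_ord]) |>.lt_of_ne hX
  obtain ⟨γ, hγ⟩ := not_isCofinal_iff.1 fun h => (Order.cof_le h).not_gt hXlt
  exact ⟨γ, mem_of_superset hXV hγ⟩

theorem Ultrafilter.exists_eventually_lt_map_of_minimal {α β : Type*} [Preorder β]
    {U : Ultrafilter α} {P : Ultrafilter β → Prop}
    (hP : ∀ V : Ultrafilter β, ¬ P V → ∃ γ, ∀ᶠ y in (V : Filter β), y < γ) {f : α → β}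
    (hmin : ∀ g : α → β, P (U.map g) → ¬ ∀ᶠ x in U, g x < f x)
    {g : β → β} (hg : ∀ᶠ y in (U.map f : Filter β), g y < y) :
    ∃ γ, ∀ᶠ y in (U.map f : Filter β), g y < γ :=
  hP _ fun hgf => hmin (g ∘ f) hgf hg

theorem stmt5_general (lam δ : Cardinal) (hlam : lam.IsRegular) (hδ : ℵ₀ < δ)
    (h : ∃ U : Ultrafilter lam.ord.ToType,
      UComplete δ (U : Filter lam.ord.ToType) ∧ ∀ X ∈ U, #X = lam) :
    ∃ U : Ultrafilter lam.ord.ToType,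
      UComplete δ (U : Filter lam.ord.ToType) ∧ (∀ X ∈ U, #X = lam) ∧
      ∀ f : lam.ord.ToType → lam.ord.ToType, {α | f α < α} ∈ U →
        ∃ γ : lam.ord.ToType, {α | f α < γ} ∈ U := by
  obtain ⟨U, hUc, hUu⟩ := h
  have := hUc.countableInterFilter hδ
  obtain ⟨f, hf, hmin⟩ := (wellFounded_eventually_lt (β := lam.ord.ToType) U).has_min
    {f | ∀ X ∈ U.map f, #X = lam} ⟨id, hUu⟩
  exact ⟨U.map f, hUc.map f, hf, fun g hg =>
    U.exists_eventually_lt_map_of_minimal (hlam.exists_eventually_lt ·) hmin hg⟩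

/-- let `λ` be a regular cardinal and `δ ≤ λ` an uncountable cardinal.
If there exists a `δ`-complete uniform ultrafilter over `λ`, then there exists a
`δ`-complete weakly normal uniform ultrafilter over `λ`.  (Here `λ` is realized as the
canonical type `lam.ord.toType` of ordinals below `λ`; uniform means every member of the
ultrafilter has cardinality `λ`, and weakly normal means every function regressive on a
large set is bounded on a large set.) -/
theorem stmt5 (lam δ : Cardinal) (hlam : lam.IsRegular) (hδ : ℵ₀ < δ) (hδlam : δ ≤ lam)
    (h : ∃ U : Ultrafilter lam.ord.ToType,
      UComplete δ (U : Filter lam.ord.ToType) ∧ ∀ X ∈ U, #X = lam) :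
    ∃ U : Ultrafilter lam.ord.ToType,
      UComplete δ (U : Filter lam.ord.ToType) ∧ (∀ X ∈ U, #X = lam) ∧
      ∀ f : lam.ord.ToType → lam.ord.ToType, {α | f α < α} ∈ U →
        ∃ γ : lam.ord.ToType, {α | f α < γ} ∈ U :=
  stmt5_general lam δ hlam hδ h
end

section
/- Let λ be a regular cardinal, μ a cardinal, and U a σ-complete weakly normal uniform ultrafilter over λ. Then U is (μ, λ)-regular if and only if {α < λ : cf(α) < μ} ∈ U. -/
/-!
(⇒) If `X_ξ` (`ξ < λ`) witness `(μ, λ)`-regularity, every `α` lies in fewer than `μ` of the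
`X_ξ`. Were `cf(α) ≥ μ` for `U`-almost all `α`, the indices `ξ < α` with `α ∈ X_ξ` would be
bounded by some `f(α) < α`; weak normality bounds `f` by a single `γ` on a `U`-large set, and any
`α > γ` of that set lying in `X_γ` gives a contradiction.

(⇐) Fix cofinal sets `E_α ⊆ α` of size `< μ`. For every `γ`, weak normality applied to a choice
of an element of `E_α ∩ [γ, α)` gives `γ'` such that `E_α` meets `[γ, γ')` for `U`-almost all `α`.
Choosing by recursion `γ_ξ` (`ξ < λ`) with `γ'_ξ < γ_η` for `ξ < η`, the sets
`{α : E_α meets [γ_ξ, γ'_ξ)}` witness regularity: a point in `μ` of them has `μ` distinct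
elements in `E_α`.
-/

open Cardinal Filter

/-- `cf(α) < μ`: the element `α` of a linear order has a cofinal subset of its
predecessors of cardinality `< μ`. -/
def cofLt {θ : Type} [LinearOrder θ] (α : θ) (μ : Cardinal) : Prop :=
  ∃ s : Set θ, #s < μ ∧ (∀ β ∈ s, β < α) ∧ ∀ β < α, ∃ γ ∈ s, β ≤ γ

open Set

universe u

def WeaklyNormal {α : Type u} [LinearOrder α] (U : Ultrafilter α) : Prop :=
  ∀ f : α → α, (∀ᶠ a in (U : Filter α), f a < a) → ∃ γ, ∀ᶠ a in (U : Filter α), f a < γ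

theorem WellFoundedLT.exists_forall_lt_imp_apply_lt {α : Type u} [LinearOrder α] [WellFoundedLT α]
    (hbdd : ∀ (β : α) (f : Iio β → α), ∃ y, ∀ i, f i < y) (d : α → α) :
    ∃ c : α → α, ∀ ⦃γ β⦄, γ < β → d (c γ) < c β := by
  let c : α → α := WellFoundedLT.fix fun β IH => (hbdd β fun γ => d (IH γ.1 γ.2)).choose
  refine ⟨c, fun γ β hγβ => ?_⟩
  have hc : c β = (hbdd β fun γ => d (c γ.1)).choose := WellFoundedLT.fix_eq _ β
  rw [hc]
  exact (hbdd β fun γ => d (c γ.1)).choose_spec ⟨γ, hγβ⟩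

namespace Cardinal

variable {lam : Cardinal.{u}}

theorem mk_Iic_toType_ord_lt (h : ℵ₀ ≤ lam) (γ : lam.ord.ToType) : #(Iic γ) < lam := by
  rw [← Iio_insert]
  exact mk_insert_le.trans_lt
    (add_lt_of_lt h (by simpa using mk_Iio_lt γ (by simp)) (one_lt_aleph0.trans_le h))

theorem IsRegular.exists_forall_lt_of_mk_lt (h : lam.IsRegular) {ι : Type u} (hι : #ι < lam)
    (f : ι → lam.ord.ToType) : ∃ y, ∀ i, f i < y := by
  have hcof : ¬ IsCofinal (range f) := fun hf =>
    (Order.cof_le hf).not_gt (by rw [Ordinal.cof_toType, h.cof_ord]; exact mk_range_le.trans_lt hι)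
  obtain ⟨y, hy⟩ := not_isCofinal_iff.1 hcof
  exact ⟨y, fun i => hy _ (mem_range_self i)⟩

theorem IsRegular.exists_forall_lt_imp_apply_lt (h : lam.IsRegular)
    (d : lam.ord.ToType → lam.ord.ToType) :
    ∃ c : lam.ord.ToType → lam.ord.ToType, ∀ ⦃γ β⦄, γ < β → d (c γ) < c β :=
  WellFoundedLT.exists_forall_lt_imp_apply_lt
    (fun β => h.exists_forall_lt_of_mk_lt (by simpa using mk_Iio_lt β (by simp))) d

end Cardinal

theorem Ultrafilter.Ioi_mem_of_mk_Iic_lt {α : Type u} [LinearOrder α] {U : Ultrafilter α}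
    {lam : Cardinal.{u}} (huni : ∀ X ∈ U, #X = lam) {γ : α} (h : #(Iic γ) < lam) : Ioi γ ∈ U := by
  rw [← compl_Iic]
  exact U.compl_mem_iff_notMem.2 fun hγ => (huni _ hγ).not_lt h

theorem IsRegUF.exists_mk_setOf_mem_lt {A β : Type} {U : Ultrafilter A} {μ : Cardinal}
    (h : IsRegUF U μ #β) : ∃ X : β → Set A, (∀ i, X i ∈ U) ∧ ∀ a, #{i | a ∈ X i} < μ := by
  obtain ⟨ι, X, hι, hXU, hX⟩ := h
  obtain ⟨e⟩ : Nonempty (β ≃ ι) := Cardinal.eq.1 hι.symm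
  refine ⟨X ∘ e, fun i => hXU _, fun a => not_le.1 fun hμ => ?_⟩
  obtain ⟨s, hs, hsμ⟩ := le_mk_iff_exists_subset.1 hμ
  have hempty := hX (e '' s) (by rwa [mk_image_eq e.injective])
  have ha : a ∈ ⋂ i ∈ e '' s, X i := mem_iInter₂.2 <| by
    rintro _ ⟨i, hi, rfl⟩
    exact hs hi
  rw [hempty] at ha
  exact ha

theorem exists_lt_forall_le_imp_le_of_not_cofLt {θ : Type} [LinearOrder θ] {a : θ} {μ : Cardinal}
    (ha : ¬ cofLt a μ) {G : Set θ} (hG : #G < μ) : ∃ b < a, ∀ δ ∈ G, b ≤ δ → a ≤ δ := by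
  by_contra! h
  refine ha ⟨G ∩ Iio a, (mk_le_mk_of_subset inter_subset_left).trans_lt hG,
    fun _ hδ => hδ.2, fun b hb => ?_⟩
  obtain ⟨δ, hδG, hbδ, hδa⟩ := h b hb
  exact ⟨δ, ⟨hδG, hδa⟩, hbδ⟩

theorem cofLt_mem_of_isRegUF {θ : Type} [LinearOrder θ] {U : Ultrafilter θ} {μ : Cardinal}
    (htail : ∀ γ, Ioi γ ∈ U) (hwn : WeaklyNormal U) (h : IsRegUF U μ #θ) :
    {a | cofLt a μ} ∈ U := by
  obtain ⟨X, hXU, hX⟩ := h.exists_mk_setOf_mem_lt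
  by_contra hS
  have : Nonempty θ := (U.nonempty_of_mem univ_mem).to_type
  let f : θ → θ := fun a => Classical.epsilon fun b => b < a ∧ ∀ δ, a ∈ X δ → b ≤ δ → a ≤ δ
  have hf : ∀ᶠ a in (U : Filter θ), f a < a ∧ ∀ δ, a ∈ X δ → f a ≤ δ → a ≤ δ := by
    filter_upwards [U.compl_mem_iff_notMem.2 hS] with a ha
    exact Classical.epsilon_spec (exists_lt_forall_le_imp_le_of_not_cofLt ha (hX a))
  obtain ⟨γ, hγ⟩ := hwn f (hf.mono fun _ h => h.1)
  have hXγ : ∀ᶠ a in (U : Filter θ), a ∈ X γ ∧ γ < a :=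
    inter_mem (Ultrafilter.mem_coe.2 (hXU γ)) (Ultrafilter.mem_coe.2 (htail γ))
  obtain ⟨a, ⟨-, hfa⟩, hfγ, haX, hγa⟩ := (hf.and (hγ.and hXγ)).exists
  exact (hfa γ haX hfγ.le).not_gt hγa

theorem mk_le_of_forall_nonempty_inter_Ico {ι α : Type u} [LinearOrder ι] [LinearOrder α]
    {c d : ι → α} {E : Set α} (hcd : ∀ ⦃i j⦄, i < j → d i ≤ c j)
    (hE : ∀ i, (E ∩ Ico (c i) (d i)).Nonempty) : #ι ≤ #E := by
  choose w hwE hw using hE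
  have hmono : StrictMono w := fun i j hij => (hw i).2.trans_le ((hcd hij).trans (hw j).1)
  exact mk_le_of_injective (f := fun i => (⟨w i, hwE i⟩ : E))
    fun i j hij => hmono.injective (congrArg Subtype.val hij)

theorem WeaklyNormal.exists_eventually_nonempty_inter_Ico {α : Type u} [LinearOrder α]
    {U : Ultrafilter α} (hwn : WeaklyNormal U) (htail : ∀ γ, Ioi γ ∈ U) {E : α → Set α}
    (hE : ∀ᶠ a in (U : Filter α), ∀ b < a, ∃ δ ∈ E a, b ≤ δ ∧ δ < a) (γ : α) :
    ∃ γ', ∀ᶠ a in (U : Filter α), (E a ∩ Ico γ γ').Nonempty := by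
  have : Nonempty α := ⟨γ⟩
  let f : α → α := fun a => Classical.epsilon fun δ => δ ∈ E a ∧ γ ≤ δ ∧ δ < a
  have hf : ∀ᶠ a in (U : Filter α), f a ∈ E a ∧ γ ≤ f a ∧ f a < a := by
    filter_upwards [hE, Ultrafilter.mem_coe.2 (htail γ)] with a ha hγa
    exact Classical.epsilon_spec (ha γ hγa)
  obtain ⟨γ', hγ'⟩ := hwn f (hf.mono fun _ h => h.2.2)
  refine ⟨γ', ?_⟩
  filter_upwards [hf, hγ'] with a ha hfγ'
  exact ⟨f a, ha.1, ha.2.1, hfγ'⟩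

theorem isRegUF_of_cofLt_mem {lam μ : Cardinal} (hlam : lam.IsRegular)
    {U : Ultrafilter lam.ord.ToType} (htail : ∀ γ, Ioi γ ∈ U) (hwn : WeaklyNormal U)
    (hS : {a | cofLt a μ} ∈ U) : IsRegUF U μ lam := by
  choose! E hEμ hElt hEcof using fun (a : lam.ord.ToType) (ha : cofLt a μ) => ha
  have hcof : ∀ᶠ a in (U : Filter lam.ord.ToType), ∀ b < a, ∃ δ ∈ E a, b ≤ δ ∧ δ < a := by
    filter_upwards [Ultrafilter.mem_coe.2 hS] with a ha b hb
    obtain ⟨δ, hδ, hbδ⟩ := hEcof a ha b hb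
    exact ⟨δ, hδ, hbδ, hElt a ha δ hδ⟩
  choose d hd using hwn.exists_eventually_nonempty_inter_Ico htail hcof
  obtain ⟨c, hc⟩ := hlam.exists_forall_lt_imp_apply_lt d
  refine ⟨lam.ord.ToType, fun i => {a | cofLt a μ ∧ (E a ∩ Ico (c i) (d (c i))).Nonempty},
    mk_ord_toType lam, fun i => inter_mem hS (hd (c i)), fun s hs => ?_⟩
  refine eq_empty_of_forall_notMem fun a ha => ?_
  rw [mem_iInter₂] at ha
  have hμ : μ ≠ 0 := by
    obtain ⟨-, t, ht, -⟩ := U.nonempty_of_mem hS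
    exact (zero_le.trans_lt ht).ne'
  obtain ⟨i₀⟩ : Nonempty s := mk_ne_zero_iff.1 (hs ▸ hμ)
  have ha_cof : cofLt a μ := (ha i₀ i₀.2).1
  have hsE : #s ≤ #(E a) := mk_le_of_forall_nonempty_inter_Ico (c := fun i : s => c i)
    (fun i j hij => (hc (Subtype.coe_lt_coe.2 hij)).le) fun i => (ha i i.2).2
  exact (hEμ a ha_cof).not_ge (hs ▸ hsE)

theorem stmt7_general (lam μ : Cardinal) (hlam : lam.IsRegular)
    (U : Ultrafilter lam.ord.ToType)
    (huni : ∀ X ∈ U, #X = lam)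
    (hwn : ∀ f : lam.ord.ToType → lam.ord.ToType, {α | f α < α} ∈ U →
      ∃ γ : lam.ord.ToType, {α | f α < γ} ∈ U) :
    IsRegUF U μ lam ↔ {α : lam.ord.ToType | cofLt α μ} ∈ U := by
  have htail (γ : lam.ord.ToType) : Ioi γ ∈ U :=
    Ultrafilter.Ioi_mem_of_mk_Iic_lt huni (mk_Iic_toType_ord_lt hlam.aleph0_le γ)
  exact ⟨fun h => cofLt_mem_of_isRegUF htail hwn (by rwa [mk_ord_toType]),
    isRegUF_of_cofLt_mem hlam htail hwn⟩

/-- let `λ` be a regular cardinal, `μ` a cardinal, and `U` a σ-complete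
weakly normal uniform ultrafilter over `λ` (realized as the type `lam.ord.toType` of
ordinals below `λ`).  Then `U` is `(μ, λ)`-regular iff `{α < λ : cf(α) < μ} ∈ U`. -/
theorem stmt7 (lam μ : Cardinal) (hlam : lam.IsRegular)
    (U : Ultrafilter lam.ord.ToType)
    (hσ : SigmaComplete (U : Filter lam.ord.ToType))
    (huni : ∀ X ∈ U, #X = lam)
    (hwn : ∀ f : lam.ord.ToType → lam.ord.ToType, {α | f α < α} ∈ U →
      ∃ γ : lam.ord.ToType, {α | f α < γ} ∈ U) :
    IsRegUF U μ lam ↔ {α : lam.ord.ToType | cofLt α μ} ∈ U :=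
  stmt7_general lam μ hlam U huni hwn
end

section
/- Suppose λ is a regular cardinal ≥ κ carrying no δ-complete uniform ultrafilter. Let {𝒜^α : α < 2^λ} enumerate all partitions of λ into fewer than δ pieces, with 𝒜^α = {A^α_ξ : ξ < δ_α} and δ_α < δ. Then the product space X = ∏_{α < 2^λ} δ_α (each δ_α discrete) is not λ-Lindelöf: the set Y = {f_γ : γ < λ}, where f_γ(α) is the unique ξ with γ ∈ A^α_ξ, has the property that every point g ∈ X has an open neighborhood meeting Y in fewer than λ points, yielding an open cover of X with no subcover of size < λ. -/
open Cardinal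

/-- A topological space is `μ`-Lindelöf if every open cover has a subcover of
size `< μ`. -/
def IsMuLindelof (μ : Cardinal) (X : Type) [TopologicalSpace X] : Prop :=
  ∀ 𝒰 : Set (Set X), (∀ O ∈ 𝒰, IsOpen O) → ⋃₀ 𝒰 = Set.univ →
    ∃ 𝒱 ⊆ 𝒰, #𝒱 < μ ∧ ⋃₀ 𝒱 = Set.univ

/-!
If some point `g` had every neighbourhood meeting `Y = {f_γ}` in `λ` points, the trace of the
neighbourhood filter of `g` on `λ`, `comap f (𝓝 g)`, would be uniform. Every partition of `λ`
into fewer than `δ` pieces is the fibre partition of some coordinate, and each coordinate is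
constant near `g`, so one piece of every such partition belongs to this filter. This makes it a
`δ`-complete ultrafilter, which does not exist. Then a subcover of size `< λ` of the resulting
cover of `X` would cover `Y`, which has size `λ`, by fewer than `λ` sets each meeting it in fewer
than `λ` points, against the regularity of `λ`.
-/

open Filter Function Set Topology

section UltrafilterCriteria

variable {L : Type} {F : Filter L}

theorem exists_ultrafilter_coe_eq_of_eventuallyConst [F.NeBot]
    (h : ∀ s : Set L, EventuallyConst s F) : ∃ U : Ultrafilter L, (U : Filter L) = F :=
  ⟨.ofComplNotMemIff F fun s => ⟨fun hsc => (eventuallyConst_set.1 (h s)).resolve_right hsc,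
    compl_notMem⟩, rfl⟩

theorem uComplete_of_eventuallyConst {δ : Cardinal} (hδ : ℵ₀ ≤ δ) [F.NeBot]
    (h : ∀ (W : Type) (π : L → W), #W < δ → EventuallyConst π F) : UComplete δ F := by
  intro s hs hsF
  have hwitness : ∀ γ, ∃ w : Option s,
      (w = none → γ ∈ ⋂₀ s) ∧ ∀ A : s, w = some A → γ ∉ A.1 := by
    intro γ
    by_cases hγ : γ ∈ ⋂₀ s
    · exact ⟨none, fun _ => hγ, by simp⟩
    · obtain ⟨A, hA, hγA⟩ : ∃ A ∈ s, γ ∉ A := by simpa [mem_sInter] using hγ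
      exact ⟨some ⟨A, hA⟩, by simp, by simp [hγA]⟩
  choose q hq_none hq_some using hwitness
  have hq : EventuallyConst q F := h _ q <| by
    rw [mk_option]
    exact add_lt_of_lt hδ hs (one_lt_aleph0.trans_le hδ)
  obtain ⟨w, hw⟩ := hq.eventuallyEq_const
  cases w with
  | none => exact hw.mono hq_none
  | some A =>
    have hA : ∀ᶠ γ in F, γ ∈ A.1 := hsF A A.2
    obtain ⟨γ, hγA, hγ⟩ := (hA.and hw).exists
    exact absurd hγA (hq_some γ A hγ)

end UltrafilterCriteria

section Partitions

variable {L ι : Type} {T : ι → Type} {δ : Cardinal} {c : ∀ a, L → T a}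

def RealizesSmallPartitions (δ : Cardinal) (c : ∀ a, L → T a) : Prop :=
  ∀ S : Set (Set L), (∀ p ∈ S, p ≠ ∅) → (S.Pairwise fun p q => p ∩ q = ∅) → ⋃₀ S = Set.univ →
    #S < δ → ∃ a : ι, S = range fun t : T a => c a ⁻¹' {t}

theorem RealizesSmallPartitions.exists_fibers_eq (hc : RealizesSmallPartitions δ c) {W : Type}
    (π : L → W) (hW : #W < δ) : ∃ a, ∀ γ γ', c a γ = c a γ' ↔ π γ = π γ' := by
  set S := range fun γ => π ⁻¹' {π γ}
  have hne : ∀ p ∈ S, p ≠ ∅ := by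
    rintro _ ⟨γ, rfl⟩
    exact Nonempty.ne_empty ⟨γ, rfl⟩
  have hdisj : S.Pairwise fun p q => p ∩ q = ∅ := by
    rintro _ ⟨γ, rfl⟩ _ ⟨γ', rfl⟩ hpq
    have : π γ ≠ π γ' := fun h => hpq (congrArg (fun w => π ⁻¹' {w}) h)
    exact disjoint_iff_inter_eq_empty.1 ((disjoint_singleton.2 this).preimage π)
  have hcover : ⋃₀ S = Set.univ :=
    eq_univ_of_forall fun γ =>
      mem_sUnion_of_mem (show γ ∈ π ⁻¹' {π γ} from rfl) (mem_range_self γ)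
  have hcard : #S < δ := calc
    #S ≤ #(range fun w : W => π ⁻¹' {w}) :=
      mk_le_mk_of_subset (range_subset_iff.2 fun γ => mem_range_self (π γ))
    _ ≤ #W := mk_range_le
    _ < δ := hW
  obtain ⟨a, ha⟩ := hc S hne hdisj hcover hcard
  refine ⟨a, fun γ γ' => ?_⟩
  obtain ⟨t, ht : c a ⁻¹' {t} = π ⁻¹' {π γ}⟩ : π ⁻¹' {π γ} ∈ range fun t => c a ⁻¹' {t} :=
    ha ▸ mem_range_self γ
  have hγt : γ ∈ c a ⁻¹' {t} := by rw [ht]; rfl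
  obtain rfl : c a γ = t := hγt
  simpa [eq_comm] using Set.ext_iff.1 ht γ'

theorem RealizesSmallPartitions.injective_swap (hc : RealizesSmallPartitions δ c) (hδ : 2 < δ) :
    Injective (swap c) := by
  intro γ γ' h
  obtain ⟨a, ha⟩ := hc.exists_fibers_eq (· = γ) (by rwa [mk_Prop])
  simpa [eq_comm] using (ha γ γ').1 (congrFun h a)

variable [∀ a, TopologicalSpace (T a)] [∀ a, DiscreteTopology (T a)]

theorem RealizesSmallPartitions.eventuallyConst_comap_nhds (hc : RealizesSmallPartitions δ c)
    (g : ∀ a, T a) [(comap (swap c) (𝓝 g)).NeBot] {W : Type} (π : L → W) (hW : #W < δ) :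
    EventuallyConst π (comap (swap c) (𝓝 g)) := by
  obtain ⟨a, ha⟩ := hc.exists_fibers_eq π hW
  have hga : ∀ᶠ γ in comap (swap c) (𝓝 g), c a γ = g a :=
    preimage_mem_comap (((isOpen_discrete {g a}).preimage (continuous_apply a)).mem_nhds rfl)
  obtain ⟨γ₀, hγ₀⟩ := hga.exists
  have : Nonempty W := ⟨π γ₀⟩
  exact eventuallyConst_iff_exists_eventuallyEq.2
    ⟨π γ₀, hga.mono fun γ hγ => (ha γ γ₀).1 (hγ.trans hγ₀.symm)⟩

end Partitions

theorem exists_isOpen_mk_inter_range_swap_lt {L ι : Type} {T : ι → Type}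
    [∀ a, TopologicalSpace (T a)] [∀ a, DiscreteTopology (T a)] {δ lam : Cardinal}
    {c : ∀ a, L → T a} (hc : RealizesSmallPartitions δ c) (hδ : ℵ₀ ≤ δ) (hlam : lam ≠ 0)
    (hL : #L ≤ lam) (hno : ¬∃ U : Ultrafilter L, UComplete δ (U : Filter L) ∧ ∀ X ∈ U, #X = lam)
    (g : ∀ a, T a) :
    ∃ O : Set (∀ a, T a), IsOpen O ∧ g ∈ O ∧ #(O ∩ range (swap c) : Set _) < lam := by
  by_contra! hbig
  have hF : ∀ A ∈ comap (swap c) (𝓝 g), lam ≤ #A := by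
    intro A hA
    obtain ⟨t, ht, htA⟩ := mem_comap.1 hA
    obtain ⟨O, hOt, hO, hgO⟩ := mem_nhds_iff.1 ht
    calc lam ≤ #(O ∩ range (swap c) : Set _) := hbig O hO hgO
      _ = #(swap c '' (swap c ⁻¹' O)) := by rw [image_preimage_eq_inter_range]
      _ ≤ #(swap c ⁻¹' O) := mk_image_le
      _ ≤ #A := mk_le_mk_of_subset ((preimage_mono hOt).trans htA)
  have : (comap (swap c) (𝓝 g)).NeBot :=
    ⟨fun hbot => hlam (le_zero_iff.1 (by simpa using hF ∅ (hbot ▸ mem_bot)))⟩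
  have hconst := fun (W : Type) (π : L → W) (hW : #W < δ) => hc.eventuallyConst_comap_nhds g π hW
  have hProp : #Prop < δ := by rw [mk_Prop]; exact ofNat_lt_aleph0.trans_le hδ
  obtain ⟨U, hU⟩ := exists_ultrafilter_coe_eq_of_eventuallyConst fun s => hconst Prop s hProp
  exact hno ⟨U, hU ▸ uComplete_of_eventuallyConst hδ hconst,
    fun X hX => le_antisymm ((mk_set_le X).trans hL) (hF X (hU ▸ (hX : X ∈ (U : Filter L))))⟩

theorem not_isMuLindelof_of_forall_exists_isOpen {X : Type} [TopologicalSpace X] {lam : Cardinal}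
    (hreg : lam.IsRegular) {Y : Set X} (hY : lam ≤ #Y)
    (h : ∀ x, ∃ O : Set X, IsOpen O ∧ x ∈ O ∧ #(O ∩ Y : Set X) < lam) : ¬IsMuLindelof lam X := by
  intro hX
  choose O hO hxO hOY using h
  obtain ⟨𝒱, h𝒱O, h𝒱lt, h𝒱cover⟩ := hX (range O) (forall_mem_range.2 hO)
    (eq_univ_of_forall fun x => mem_sUnion_of_mem (hxO x) (mem_range_self x))
  have hYcover : Y ⊆ ⋃ V : 𝒱, (V : Set X) ∩ Y := fun y hy => by
    obtain ⟨V, hV, hyV⟩ := h𝒱cover.symm ▸ mem_univ y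
    exact mem_iUnion.2 ⟨⟨V, hV⟩, hyV, hy⟩
  refine hY.not_gt ((mk_le_mk_of_subset hYcover).trans_lt ?_)
  refine (card_iUnion_lt_iff_forall_of_isRegular hreg h𝒱lt).2 fun ⟨V, hV⟩ => ?_
  obtain ⟨x, rfl⟩ := h𝒱O hV
  exact hOY x

theorem stmt16_general (δ lam : Cardinal) (hδ : ℵ₀ < δ)
    (hreg : lam.IsRegular)
    (hno : ¬∃ U : Ultrafilter lam.ord.ToType,
      UComplete δ (U : Filter lam.ord.ToType) ∧ ∀ X ∈ U, #X = lam)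
    (ι : Type) (T : ι → Type) [∀ a, TopologicalSpace (T a)]
    (hdisc : ∀ a, DiscreteTopology (T a))
    (c : ∀ a, lam.ord.ToType → T a)
    (hall : ∀ S : Set (Set lam.ord.ToType),
      (∀ p ∈ S, p ≠ ∅) → (S.Pairwise fun p q => p ∩ q = ∅) → ⋃₀ S = Set.univ →
      #S < δ → ∃ a : ι, S = Set.range fun t : T a => (c a) ⁻¹' {t}) :
    (∀ g : ∀ a, T a, ∃ O : Set (∀ a, T a), IsOpen O ∧ g ∈ O ∧
      #(O ∩ Set.range fun (γ : lam.ord.ToType) (a : ι) => c a γ : Set (∀ a, T a)) < lam) ∧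
    ¬IsMuLindelof lam (∀ a, T a) := by
  have hc : RealizesSmallPartitions δ c := hall
  have hL : #lam.ord.ToType = lam := mk_ord_toType lam
  have hsmall := exists_isOpen_mk_inter_range_swap_lt hc hδ.le hreg.pos.ne' hL.le hno
  refine ⟨hsmall, not_isMuLindelof_of_forall_exists_isOpen hreg ?_ hsmall⟩
  rw [mk_range_eq _ (hc.injective_swap (ofNat_lt_aleph0.trans hδ)), hL]

/-- suppose `δ ≤ κ ≤ λ` are uncountable cardinals, `λ` regular, and `λ`
(realized as the type `lam.ord.ToType` of ordinals below `λ`) carries no `δ`-complete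
uniform ultrafilter.  Let `{𝒜^a : a ∈ ι}` enumerate all partitions of `λ` into fewer
than `δ` pieces; here the partition `𝒜^a` is presented by a surjective coloring
`c a : λ → T a` onto a discrete space `T a` of size `δ_a < δ` (its pieces being the
fibers `A^a_ξ = (c a)⁻¹{ξ}`), and the enumeration is complete in the sense that every
partition of `λ` into fewer than `δ` (nonempty, pairwise disjoint) pieces equals the
family of fibers of some `c a`.  Then the product space `X = ∏_a T a` is not
`λ`-Lindelöf: the set `Y = {f_γ : γ < λ}`, where `f_γ a = c a γ`, has the property
that every point `g ∈ X` has an open neighborhood meeting `Y` in fewer than `λ`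
points, yielding an open cover of `X` with no subcover of size `< λ`. -/
theorem stmt16 (δ κ lam : Cardinal) (hδ : ℵ₀ < δ) (hδκ : δ ≤ κ) (hκlam : κ ≤ lam)
    (hreg : lam.IsRegular)
    (hno : ¬∃ U : Ultrafilter lam.ord.ToType,
      UComplete δ (U : Filter lam.ord.ToType) ∧ ∀ X ∈ U, #X = lam)
    (ι : Type) (T : ι → Type) [∀ a, TopologicalSpace (T a)]
    (hdisc : ∀ a, DiscreteTopology (T a)) (hsize : ∀ a, #(T a) < δ)
    (c : ∀ a, lam.ord.ToType → T a) (hsurj : ∀ a, Function.Surjective (c a))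
    (hall : ∀ S : Set (Set lam.ord.ToType),
      (∀ p ∈ S, p ≠ ∅) → (S.Pairwise fun p q => p ∩ q = ∅) → ⋃₀ S = Set.univ →
      #S < δ → ∃ a : ι, S = Set.range fun t : T a => (c a) ⁻¹' {t}) :
    (∀ g : ∀ a, T a, ∃ O : Set (∀ a, T a), IsOpen O ∧ g ∈ O ∧
      #(O ∩ Set.range fun (γ : lam.ord.ToType) (a : ι) => c a γ : Set (∀ a, T a)) < lam) ∧
    ¬IsMuLindelof lam (∀ a, T a) :=
  stmt16_general δ lam hδ hreg hno ι T hdisc c hall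
end
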